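/- arXiv:1509.02550 — 4 statements merged into one kernel-verified Lean document; each statement's English description precedes it below -/
import Mathlib

section
/- If a real symmetric block matrix Λ = [[Λ₁₁, Λ₁₂],[Λ₁₂ᵀ, Λ₂₂]] is positive semidefinite, then the trace norm of the off-diagonal block satisfies ‖Λ₁₂‖_tr² ≤ ‖Λ₁₁‖_tr · ‖Λ₂₂‖_tr. -/
open Matrix BigOperators

/-- Trace norm of a real matrix: `Tr √(MᵀM)`, the sum of singular values. -/
noncomputable def traceNorm {m n : Type*} [Fintype m] [Fintype n] [DecidableEq n]
    (M : Matrix m n ℝ) : ℝ :=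
  (((Matrix.posSemidef_conjTranspose_mul_self M).1.eigenvectorUnitary : Matrix n n ℝ) *
    Matrix.diagonal (Real.sqrt ∘ (Matrix.posSemidef_conjTranspose_mul_self M).1.eigenvalues) *
    (star (Matrix.posSemidef_conjTranspose_mul_self M).1.eigenvectorUnitary : Matrix n n ℝ)).trace

/-!
Write the positive semidefinite block matrix as a Gram matrix `Rᴴ R` and split `R = [A B]` by
columns, so that `Λ₁₁ = AᴴA`, `Λ₁₂ = AᴴB` and `Λ₂₂ = BᴴB`. The trace norm of a positive
semidefinite matrix is its trace, and the trace norm of `M = AᴴB` is attained as `tr (Kᴴ M)` by a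
contraction `K`. Cauchy–Schwarz for the Frobenius inner product then gives
`tr (Kᴴ AᴴB)² = tr (Aᴴ (B Kᴴ))² ≤ tr (AᴴA) · tr (B KᴴK Bᴴ) ≤ tr (AᴴA) · tr (BᴴB)`.
-/

section TraceNorm

open scoped MatrixOrder ComplexOrder

variable {m n k : Type*} [Fintype m] [Fintype n] [Fintype k]

lemma Matrix.trace_conjTranspose_mul_sq_le (X Y : Matrix k n ℝ) :
    (Xᴴ * Y).trace ^ 2 ≤ (Xᴴ * X).trace * (Yᴴ * Y).trace := by
  simp only [trace, diag, mul_apply, conjTranspose_apply, star_trivial, ← Finset.sum_product']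
  simpa only [sq] using
    Finset.sum_mul_sq_le_sq_mul_sq _ (fun p : n × k => X p.2 p.1) (fun p => Y p.2 p.1)

lemma Matrix.PosSemidef.exists_eq_conjTranspose_mul_self {𝕜 : Type*} [RCLike 𝕜]
    [DecidableEq n] {A : Matrix n n 𝕜} (hA : A.PosSemidef) : ∃ R : Matrix n n 𝕜, A = Rᴴ * R :=
  ⟨CFC.sqrt A, by
    rw [← star_eq_conjTranspose, (CFC.sqrt_nonneg A).isSelfAdjoint.star_eq,
      CFC.sqrt_mul_sqrt_self A hA.nonneg]⟩

lemma Matrix.PosSemidef.exists_fromBlocks_eq_conjTranspose_mul {𝕜 : Type*} [RCLike 𝕜]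
    [DecidableEq m] [DecidableEq n] {A₁₁ : Matrix m m 𝕜} {A₁₂ : Matrix m n 𝕜}
    {A₂₁ : Matrix n m 𝕜} {A₂₂ : Matrix n n 𝕜} (h : (fromBlocks A₁₁ A₁₂ A₂₁ A₂₂).PosSemidef) :
    ∃ (B : Matrix (m ⊕ n) m 𝕜) (C : Matrix (m ⊕ n) n 𝕜),
      A₁₁ = Bᴴ * B ∧ A₁₂ = Bᴴ * C ∧ A₂₂ = Cᴴ * C := by
  obtain ⟨R, hR⟩ := h.exists_eq_conjTranspose_mul_self
  rw [← fromCols_toCols R, conjTranspose_fromCols_eq_fromRows_conjTranspose,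
    fromRows_mul_fromCols, fromBlocks_inj] at hR
  exact ⟨R.toCols₁, R.toCols₂, hR.1, hR.2.1, hR.2.2.2⟩

lemma traceNorm_eq_trace_sqrt [DecidableEq n] (M : Matrix m n ℝ) :
    traceNorm M = (CFC.sqrt (Mᴴ * M)).trace := by
  have hM := posSemidef_conjTranspose_mul_self M
  rw [CFC.sqrt_eq_real_sqrt _ hM.nonneg, cfcₙ_eq_cfc, hM.1.cfc_eq]
  rfl

lemma traceNorm_of_posSemidef [DecidableEq n] {M : Matrix n n ℝ} (hM : M.PosSemidef) :
    traceNorm M = M.trace := by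
  rw [traceNorm_eq_trace_sqrt, hM.1.eq, ← sq, CFC.sqrt_sq M hM.nonneg]

/-- The contraction is `K = M (MᴴM)^(-1/2)`, where `0⁻¹ = 0` turns the inverse square root into a
pseudo-inverse: `KᴴM = (MᴴM)^(1/2)`, and `KᴴK` is the projection onto the range of `MᴴM`. -/
lemma exists_contraction_trace_eq_traceNorm [DecidableEq n] (M : Matrix m n ℝ) :
    ∃ K : Matrix m n ℝ, Kᴴ * K ≤ 1 ∧ (Kᴴ * M).trace = traceNorm M := by
  have hN := posSemidef_conjTranspose_mul_self M
  have hcont (f : ℝ → ℝ) : ContinuousOn f (spectrum ℝ (Mᴴ * M)) :=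
    (Mᴴ * M).finite_real_spectrum.continuousOn f
  have hP : (cfc (fun x => (√x)⁻¹) (Mᴴ * M))ᴴ = cfc (fun x => (√x)⁻¹) (Mᴴ * M) :=
    IsSelfAdjoint.star_eq (cfc_predicate _ _)
  have hPN : cfc (fun x => (√x)⁻¹) (Mᴴ * M) * (Mᴴ * M) = cfc Real.sqrt (Mᴴ * M) := by
    nth_rw 2 [← cfc_id' ℝ (Mᴴ * M) (p := IsSelfAdjoint) hN.isHermitian]
    rw [← cfc_mul _ _ _ (hcont _) (hcont _)]
    congr 1 with x
    rw [inv_mul_eq_div, Real.div_sqrt]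
  refine ⟨M * cfc (fun x => (√x)⁻¹) (Mᴴ * M), ?_, ?_⟩
  · rw [conjTranspose_mul, hP, ← Matrix.mul_assoc, Matrix.mul_assoc _ Mᴴ M, hPN,
      ← cfc_mul _ _ _ (hcont _) (hcont _)]
    exact cfc_le_one _ _ fun x _ => div_self_le_one (√x)
  · rw [conjTranspose_mul, hP, Matrix.mul_assoc, hPN, traceNorm_eq_trace_sqrt,
      CFC.sqrt_eq_real_sqrt _ hN.nonneg, cfcₙ_eq_cfc]

lemma sq_traceNorm_conjTranspose_mul_le [DecidableEq n] (A : Matrix k m ℝ) (B : Matrix k n ℝ) :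
    traceNorm (Aᴴ * B) ^ 2 ≤ (Aᴴ * A).trace * (Bᴴ * B).trace := by
  obtain ⟨K, hK, hKtr⟩ := exists_contraction_trace_eq_traceNorm (Aᴴ * B)
  have hBK : ((B * Kᴴ)ᴴ * (B * Kᴴ)).trace ≤ (Bᴴ * B).trace := by
    have h := ((Matrix.le_iff.mp hK).mul_mul_conjTranspose_same B).trace_nonneg
    rw [Matrix.mul_sub, Matrix.sub_mul, trace_sub, Matrix.mul_one, sub_nonneg] at h
    rw [conjTranspose_mul, conjTranspose_conjTranspose, trace_mul_comm Bᴴ, trace_mul_comm]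
    simpa only [Matrix.mul_assoc] using h
  calc traceNorm (Aᴴ * B) ^ 2 = (Aᴴ * (B * Kᴴ)).trace ^ 2 := by
        rw [← hKtr, trace_mul_comm, Matrix.mul_assoc]
    _ ≤ (Aᴴ * A).trace * ((B * Kᴴ)ᴴ * (B * Kᴴ)).trace := trace_conjTranspose_mul_sq_le _ _
    _ ≤ (Aᴴ * A).trace * (Bᴴ * B).trace :=
        mul_le_mul_of_nonneg_left hBK (posSemidef_conjTranspose_mul_self A).trace_nonneg

end TraceNorm

theorem block_psd_trace_norm_ineq_general {m n : Type*} [Fintype m] [Fintype n]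
    [DecidableEq m] [DecidableEq n]
    (Λ11 : Matrix m m ℝ) (Λ12 : Matrix m n ℝ) (Λ22 : Matrix n n ℝ)
    (hΛ : (Matrix.fromBlocks Λ11 Λ12 Λ12ᵀ Λ22).PosSemidef) :
    traceNorm Λ12 ^ 2 ≤ traceNorm Λ11 * traceNorm Λ22 := by
  obtain ⟨A, B, rfl, rfl, rfl⟩ := hΛ.exists_fromBlocks_eq_conjTranspose_mul
  rw [traceNorm_of_posSemidef (posSemidef_conjTranspose_mul_self A),
    traceNorm_of_posSemidef (posSemidef_conjTranspose_mul_self B)]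
  exact sq_traceNorm_conjTranspose_mul_le A B

theorem block_psd_trace_norm_ineq {m n : Type*} [Fintype m] [Fintype n]
    [DecidableEq m] [DecidableEq n]
    (Λ11 : Matrix m m ℝ) (Λ12 : Matrix m n ℝ) (Λ22 : Matrix n n ℝ)
    (h11 : Λ11.IsSymm) (h22 : Λ22.IsSymm)
    (hΛ : (Matrix.fromBlocks Λ11 Λ12 Λ12ᵀ Λ22).PosSemidef) :
    traceNorm Λ12 ^ 2 ≤ traceNorm Λ11 * traceNorm Λ22 :=
  block_psd_trace_norm_ineq_general Λ11 Λ12 Λ22 hΛ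
end

section
/- If Λ = [[A, C],[Cᵀ, B]] is a positive semidefinite real symmetric block matrix, then Tr(Cᵀ A⁺ C) ≤ Tr(B), where A⁺ is the Moore–Penrose pseudoinverse of A. -/
open Matrix BigOperators

/-- The four Penrose conditions characterizing the Moore–Penrose pseudoinverse
of a real square matrix. -/
def IsMoorePenrose {n : Type*} [Fintype n] (A P : Matrix n n ℝ) : Prop :=
  A * P * A = A ∧ P * A * P = P ∧ (A * P)ᵀ = A * P ∧ (P * A)ᵀ = P * A

/-!
A vector `x` with `xᴴ A x = 0` gives the null vector `(x, 0)` of `Λ`, hence `Cᴴ x = 0`. Applied to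
the columns of `1 - A P`, which is symmetric and kills `A`, this gives `A P C = C`. Compressing `Λ`
onto the columns of `[-P C; 1]` then shows that `B - Cᵀ P C` is positive semidefinite, so its trace
is nonnegative.
-/

namespace Matrix.PosSemidef

open scoped ComplexOrder

variable {𝕜 m n : Type*} [RCLike 𝕜] [Fintype m] [Fintype n]
  {A : Matrix m m 𝕜} {B : Matrix n n 𝕜} {C : Matrix m n 𝕜}

theorem conjTranspose_mulVec_eq_zero_of_fromBlocks (hΛ : (fromBlocks A C Cᴴ B).PosSemidef)
    {x : m → 𝕜} (hx : star x ⬝ᵥ (A *ᵥ x) = 0) : Cᴴ *ᵥ x = 0 := by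
  have hker := (hΛ.dotProduct_mulVec_zero_iff (Sum.elim x 0)).1 (by
    simpa [fromBlocks_mulVec, Function.star_sumElim, sumElim_dotProduct_sumElim] using hx)
  ext j
  simpa [fromBlocks_mulVec] using congrFun hker (Sum.inr j)

theorem conjTranspose_mul_eq_zero_of_fromBlocks {l : Type*} [Fintype l] [DecidableEq l]
    (hΛ : (fromBlocks A C Cᴴ B).PosSemidef) {M : Matrix m l 𝕜} (hM : Mᴴ * A * M = 0) :
    Cᴴ * M = 0 := by
  ext i j
  have hcol : star (M *ᵥ Pi.single j 1) ⬝ᵥ (A *ᵥ (M *ᵥ Pi.single j 1)) = (Mᴴ * A * M) j j := by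
    rw [star_mulVec, ← dotProduct_mulVec, mulVec_mulVec, mulVec_mulVec, mulVec_single_one,
      Pi.star_single, star_one, single_dotProduct, one_mul, col_apply]
  have := hΛ.conjTranspose_mulVec_eq_zero_of_fromBlocks (hcol.trans (by rw [hM, zero_apply]))
  rw [mulVec_mulVec, mulVec_single_one] at this
  exact congrFun this i

/-- This is the compression `Vᴴ Λ V` of `Λ = fromBlocks A C Cᴴ B` by `V = fromRows X 1`. -/
theorem compress_fromBlocks (hΛ : (fromBlocks A C Cᴴ B).PosSemidef) (X : Matrix m n 𝕜) :
    (B + Cᴴ * X + Xᴴ * C + Xᴴ * A * X).PosSemidef := by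
  classical
  have hV := hΛ.conjTranspose_mul_mul_same (fromRows X 1)
  rw [conjTranspose_fromRows_eq_fromCols_conjTranspose, fromCols_mul_fromBlocks,
    fromCols_mul_fromRows] at hV
  convert hV using 1
  simp only [conjTranspose_one, Matrix.one_mul, Matrix.mul_one, Matrix.add_mul]
  abel

end Matrix.PosSemidef

theorem IsMoorePenrose.mul_mul_eq_of_fromBlocks {m n : Type*} [Fintype m] [Fintype n]
    {A P : Matrix m m ℝ} {B : Matrix n n ℝ} {C : Matrix m n ℝ} (hP : IsMoorePenrose A P)
    (hΛ : (fromBlocks A C Cᵀ B).PosSemidef) : A * P * C = C := by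
  classical
  obtain ⟨hAPA, -, hAPt, -⟩ := hP
  rw [← conjTranspose_eq_transpose_of_trivial] at hΛ
  have hMt : (1 - A * P)ᴴ = 1 - A * P := by
    rw [conjTranspose_eq_transpose_of_trivial, transpose_sub, transpose_one, hAPt]
  have hMA : (1 - A * P) * A = 0 := by rw [Matrix.sub_mul, Matrix.one_mul, hAPA, sub_self]
  have hCM := hΛ.conjTranspose_mul_eq_zero_of_fromBlocks (M := 1 - A * P)
    (by rw [hMt, hMA, Matrix.zero_mul])
  rw [← hMt, ← conjTranspose_mul, conjTranspose_eq_zero, Matrix.sub_mul, Matrix.one_mul,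
    sub_eq_zero] at hCM
  exact hCM.symm

theorem trace_schur_le_trace_block_general {m n : Type*} [Fintype m] [Fintype n]
    (A : Matrix m m ℝ) (B : Matrix n n ℝ) (C : Matrix m n ℝ)
    (P : Matrix m m ℝ) (hP : IsMoorePenrose A P)
    (hΛ : (Matrix.fromBlocks A C Cᵀ B).PosSemidef) :
    (Cᵀ * P * C).trace ≤ B.trace := by
  have hAPC : A * (P * C) = C := by rw [← Matrix.mul_assoc, hP.mul_mul_eq_of_fromBlocks hΛ]
  rw [← conjTranspose_eq_transpose_of_trivial] at hΛ
  have hSchur := hΛ.compress_fromBlocks (-(P * C))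
  have hform : B + Cᴴ * -(P * C) + (-(P * C))ᴴ * C + (-(P * C))ᴴ * A * -(P * C) =
      B - Cᵀ * P * C := by
    simp only [conjTranspose_eq_transpose_of_trivial, Matrix.mul_neg, Matrix.neg_mul,
      transpose_neg, neg_neg, Matrix.mul_assoc, hAPC]
    abel
  rw [hform] at hSchur
  simpa [trace_sub] using hSchur.trace_nonneg

theorem trace_schur_le_trace_block {m n : Type*} [Fintype m] [Fintype n]
    [DecidableEq m] [DecidableEq n]
    (A : Matrix m m ℝ) (B : Matrix n n ℝ) (C : Matrix m n ℝ)
    (hA : A.IsSymm) (hApsd : A.PosSemidef) (hB : B.IsSymm)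
    (P : Matrix m m ℝ) (hP : IsMoorePenrose A P)
    (hΛ : (Matrix.fromBlocks A C Cᵀ B).PosSemidef) :
    (Cᵀ * P * C).trace ≤ B.trace :=
  trace_schur_le_trace_block_general A B C P hP hΛ
end

section
/- For any quantum state ρ on a d-dimensional Hilbert space and LOOs {A_k}_{k=1}^{d²}, the sum of variances satisfies Σ_{k=1}^{d²} [Tr(ρ A_k²) − (Tr(ρ A_k))²] = d − Tr(ρ²), and in particular this sum is at least d − 1. -/
open Matrix BigOperators Finset ComplexOrder

/-!
Orthonormality makes `A` its own trace-dual basis: a matrix `M` in its span expands as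
`M = ∑ k, tr (M A k) • A k`, hence `tr (M N) = ∑ k, tr (M A k) tr (A k N)`. Splitting a complex
matrix into real and imaginary parts, both Hermitian, shows that the complex span is everything.
Matrix units for `M` and `N` then give `∑ k, A k * A k = d • 1`, so `∑ k, tr (ρ A k²) = d`, while
`M = N = ρ` gives `∑ k, tr (ρ A k)² = tr ρ²`. Finally `tr ρ² = ∑ λᵢ² ≤ (∑ λᵢ)² = 1` for the
eigenvalues `λᵢ ≥ 0` of `ρ`.
-/

open ComplexStarModule in
theorem Submodule.span_complex_eq_top_of_isSelfAdjoint_mem {E : Type*} [AddCommGroup E]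
    [Module ℂ E] [StarAddMonoid E] [StarModule ℂ E] {s : Set E}
    (h : ∀ a : E, IsSelfAdjoint a → a ∈ span ℝ s) : span ℂ s = ⊤ := by
  refine eq_top_iff.2 fun a _ => ?_
  have hsub := span_le_restrictScalars ℝ ℂ s
  rw [← realPart_add_I_smul_imaginaryPart a]
  exact add_mem (hsub (h _ (ℜ a).2)) (smul_mem _ _ (hsub (h _ (ℑ a).2)))

namespace Matrix

section Orthonormal

variable {R n ι : Type*} [CommRing R] [Fintype n] [Fintype ι] [DecidableEq ι]
  {A : ι → Matrix n n R}

theorem eq_sum_trace_mul_smul_of_mem_span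
    (horth : ∀ k l, (A k * A l).trace = if k = l then 1 else 0) {M : Matrix n n R}
    (hM : M ∈ Submodule.span R (Set.range A)) : M = ∑ k, (M * A k).trace • A k := by
  obtain ⟨c, rfl⟩ := (Submodule.mem_span_range_iff_exists_fun R).1 hM
  refine Finset.sum_congr rfl fun k _ => ?_
  simp [Finset.sum_mul, trace_sum, horth]

theorem trace_mul_eq_sum_of_mem_span
    (horth : ∀ k l, (A k * A l).trace = if k = l then 1 else 0) {M : Matrix n n R}
    (hM : M ∈ Submodule.span R (Set.range A)) (N : Matrix n n R) :
    (M * N).trace = ∑ k, (M * A k).trace * (A k * N).trace := by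
  conv_lhs => rw [eq_sum_trace_mul_smul_of_mem_span horth hM]
  simp [Finset.sum_mul, trace_sum]

variable [DecidableEq n]

theorem sum_apply_mul_apply_of_span_eq_top
    (horth : ∀ k l, (A k * A l).trace = if k = l then 1 else 0)
    (hspan : Submodule.span R (Set.range A) = ⊤) (i j l m : n) :
    ∑ k, A k i j * A k l m = if i = m ∧ j = l then 1 else 0 := by
  have h := trace_mul_eq_sum_of_mem_span horth (hspan ▸ Submodule.mem_top (x := single j i 1))
    (single m l 1)
  simpa [trace_single_mul, trace_mul_single, single_apply, and_comm, eq_comm] using h.symm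

theorem sum_mul_self_eq_card_smul_one_of_span_eq_top
    (horth : ∀ k l, (A k * A l).trace = if k = l then 1 else 0)
    (hspan : Submodule.span R (Set.range A) = ⊤) :
    ∑ k, A k * A k = (Fintype.card n : R) • 1 := by
  ext i m
  simp_rw [sum_apply, mul_apply]
  rw [Finset.sum_comm]
  simp [sum_apply_mul_apply_of_span_eq_top horth hspan, one_apply]

end Orthonormal

theorem IsHermitian.ofReal_re_trace_mul {n : Type*} [Fintype n] {M N : Matrix n n ℂ}
    (hM : M.IsHermitian) (hN : N.IsHermitian) : ((M * N).trace.re : ℂ) = (M * N).trace := by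
  refine Complex.conj_eq_iff_re.1 ?_
  rw [← Complex.star_def, ← trace_conjTranspose, conjTranspose_mul, hM.eq, hN.eq, trace_mul_comm]

theorem IsHermitian.trace_mul_self_eq_sum_eigenvalues_sq {𝕜 n : Type*} [RCLike 𝕜] [Fintype n]
    [DecidableEq n] {M : Matrix n n 𝕜} (hM : M.IsHermitian) :
    (M * M).trace = ∑ i, ((hM.eigenvalues i ^ 2 : ℝ) : 𝕜) := by
  conv_lhs => rw [hM.spectral_theorem, ← map_mul, Unitary.conjStarAlgAut_apply, trace_mul_cycle,
    Unitary.coe_star_mul_self, one_mul, diagonal_mul_diagonal, trace_diagonal]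
  simp [sq]

theorem PosSemidef.re_trace_mul_self_le {𝕜 n : Type*} [RCLike 𝕜] [Fintype n]
    {M : Matrix n n 𝕜} (hM : M.PosSemidef) :
    RCLike.re (M * M).trace ≤ RCLike.re M.trace ^ 2 := by
  classical
  rw [hM.1.trace_mul_self_eq_sum_eigenvalues_sq, hM.1.trace_eq_sum_eigenvalues]
  simp only [map_sum, RCLike.ofReal_re]
  exact Finset.sum_sq_le_sq_sum_of_nonneg fun i _ => hM.eigenvalues_nonneg i

end Matrix

theorem sum_variances_LOOs_eq_general (d : ℕ)
    (ρ : Matrix (Fin d) (Fin d) ℂ) (hρ : ρ.PosSemidef) (hρ1 : ρ.trace = 1)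
    (A : Fin (d ^ 2) → Matrix (Fin d) (Fin d) ℂ)
    (hherm : ∀ k, (A k).IsHermitian)
    (horth : ∀ k l, (A k * A l).trace = if k = l then 1 else 0)
    (hspan : ∀ M : Matrix (Fin d) (Fin d) ℂ, M.IsHermitian →
      M ∈ Submodule.span ℝ (Set.range A)) :
    (∑ k, ((ρ * (A k * A k)).trace.re - ((ρ * A k).trace.re) ^ 2)
        = (d : ℝ) - (ρ * ρ).trace.re) ∧
      ((d : ℝ) - 1 ≤ ∑ k, ((ρ * (A k * A k)).trace.re - ((ρ * A k).trace.re) ^ 2)) := by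
  have hspanℂ : Submodule.span ℂ (Set.range A) = ⊤ :=
    Submodule.span_complex_eq_top_of_isSelfAdjoint_mem hspan
  have hsum_second_moments : ∑ k, (ρ * (A k * A k)).trace = d := by
    rw [← trace_sum, ← Finset.mul_sum, sum_mul_self_eq_card_smul_one_of_span_eq_top horth hspanℂ]
    simp [hρ1]
  have hsum_sq_means : ∑ k, (ρ * A k).trace.re ^ 2 = (ρ * ρ).trace.re := by
    rw [trace_mul_eq_sum_of_mem_span horth (hspanℂ ▸ Submodule.mem_top) ρ, Complex.re_sum]
    refine Finset.sum_congr rfl fun k _ => ?_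
    rw [trace_mul_comm (A k), ← hρ.1.ofReal_re_trace_mul (hherm k)]
    simp [sq]
  have hvar : ∑ k, ((ρ * (A k * A k)).trace.re - (ρ * A k).trace.re ^ 2)
      = (d : ℝ) - (ρ * ρ).trace.re := by
    rw [Finset.sum_sub_distrib, ← Complex.re_sum, hsum_second_moments, hsum_sq_means,
      Complex.natCast_re]
  refine ⟨hvar, hvar ▸ ?_⟩
  have hpurity : (ρ * ρ).trace.re ≤ 1 := by simpa [hρ1] using hρ.re_trace_mul_self_le
  linarith

theorem sum_variances_LOOs_eq (d : ℕ) (hd : 0 < d)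
    (ρ : Matrix (Fin d) (Fin d) ℂ) (hρ : ρ.PosSemidef) (hρ1 : ρ.trace = 1)
    (A : Fin (d ^ 2) → Matrix (Fin d) (Fin d) ℂ)
    (hherm : ∀ k, (A k).IsHermitian)
    (horth : ∀ k l, (A k * A l).trace = if k = l then 1 else 0)
    (hspan : ∀ M : Matrix (Fin d) (Fin d) ℂ, M.IsHermitian →
      M ∈ Submodule.span ℝ (Set.range A)) :
    (∑ k, ((ρ * (A k * A k)).trace.re - ((ρ * A k).trace.re) ^ 2)
        = (d : ℝ) - (ρ * ρ).trace.re) ∧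
      ((d : ℝ) - 1 ≤ ∑ k, ((ρ * (A k * A k)).trace.re - ((ρ * A k).trace.re) ^ 2)) :=
  sum_variances_LOOs_eq_general d ρ hρ hρ1 A hherm horth hspan
end

section
/- For the operators X^(N) = (a^N + a†^N)/√2 and P^(N) = −i(a^N − a†^N)/√2 on the bosonic Fock space, the commutator satisfies [X^(N), P^(N)] = i Σ_{r=1}^{N} r!·(N choose r)² a†^{N−r} a^{N−r}; in particular the vacuum expectation of (1/i)[X^(N), P^(N)] equals N!, so δ²(X^(N)) + δ²(P^(N)) ≥ N! for all states. -/
/-! From `a a† = a† a + 1` one gets the normal-ordering formula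
`a^m a†^n = ∑ k, k! C(m,k) C(n,k) a†^(n-k) a^(m-k)`, so `[a^N, a†^N]` is the sum over `r ≥ 1` of
`r! C(N,r)² a†^(N-r) a^(N-r)`, and `[X, P] = i [a^N, a†^N]`. Every summand with `r < N` ends in `a`
and is killed by the vacuum, while the `r = N` summand is `N!`. For the variance bound, positivity
of `φ (x⋆ x)` at `x = (X - ⟨X⟩) + i (P - ⟨P⟩)` gives `δ²X + δ²P ≥ ⟨[X, P] / i⟩`, and every summand
of `[X, P] / i` has nonnegative expectation, the `r = N` one being `N!`. -/

open Finset

theorem Nat.factorial_mul_choose_succ_mul_choose_succ (m n k : ℕ) :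
    (k + 1).factorial * (m + 1).choose (k + 1) * n.choose (k + 1) =
      (k + 1).factorial * m.choose (k + 1) * n.choose (k + 1) +
        k.factorial * m.choose k * n.choose k * (n - k) := by
  have h := Nat.choose_succ_right_eq n k
  rw [Nat.choose_succ_succ, Nat.factorial_succ]
  calc (k + 1) * k.factorial * (m.choose k + m.choose (k + 1)) * n.choose (k + 1)
      = (k + 1) * k.factorial * m.choose (k + 1) * n.choose (k + 1) +
          k.factorial * m.choose k * (n.choose (k + 1) * (k + 1)) := by ring
    _ = _ := by rw [h, ← mul_assoc]

section CanonicalCommutation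

variable {R : Type*} [Ring R] {a b : R}

theorem nsmul_pow_pred_mul_self (n : ℕ) (b : R) : n • b ^ (n - 1) * b = n • b ^ n := by
  cases n <;> simp [pow_succ, mul_assoc]

theorem mul_pow_of_mul_eq_mul_add_one (h : a * b = b * a + 1) (n : ℕ) :
    a * b ^ n = b ^ n * a + n • b ^ (n - 1) := by
  induction n with
  | zero => simp
  | succ n ih =>
    rw [pow_succ, ← mul_assoc, ih, add_mul, nsmul_pow_pred_mul_self, mul_assoc, h]
    simp only [mul_add, mul_one, ← mul_assoc, ← pow_succ, Nat.add_sub_cancel, succ_nsmul]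
    abel

theorem mul_smul_pow_mul_pow_of_mul_eq_mul_add_one (h : a * b = b * a + 1) (c n k : ℕ) :
    a * (c • (b ^ n * a ^ k)) =
      c • (b ^ n * a ^ (k + 1)) + (c * n) • (b ^ (n - 1) * a ^ k) := by
  rw [mul_smul_comm, ← mul_assoc, mul_pow_of_mul_eq_mul_add_one h, add_mul, mul_assoc,
    ← pow_succ', smul_add, smul_mul_assoc, smul_smul]

theorem pow_mul_pow_of_mul_eq_mul_add_one (h : a * b = b * a + 1) (m n : ℕ) :
    a ^ m * b ^ n = ∑ k ∈ range (m + 1),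
      (k.factorial * m.choose k * n.choose k) • (b ^ (n - k) * a ^ (m - k)) := by
  induction m with
  | zero => simp
  | succ m ih =>
    have expand : a ^ (m + 1) * b ^ n = ∑ k ∈ range (m + 1),
        (k.factorial * m.choose k * n.choose k) • (b ^ (n - k) * a ^ (m + 1 - k)) +
          ∑ k ∈ range (m + 1), (k.factorial * m.choose k * n.choose k * (n - k)) •
            (b ^ (n - (k + 1)) * a ^ (m + 1 - (k + 1))) := by
      rw [pow_succ', mul_assoc, ih, mul_sum, ← sum_add_distrib]
      refine sum_congr rfl fun k hk => ?_
      rw [mul_smul_pow_mul_pow_of_mul_eq_mul_add_one h, Nat.sub_sub, Nat.add_sub_add_right,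
        Nat.sub_add_comm (Nat.lt_succ_iff.mp (mem_range.mp hk))]
    have shift : ∑ k ∈ range (m + 1),
        (k.factorial * m.choose k * n.choose k) • (b ^ (n - k) * a ^ (m + 1 - k)) =
          ∑ k ∈ range (m + 1), ((k + 1).factorial * m.choose (k + 1) * n.choose (k + 1)) •
            (b ^ (n - (k + 1)) * a ^ (m + 1 - (k + 1))) + b ^ n * a ^ (m + 1) := by
      rw [sum_range_succ' _ m, sum_range_succ _ m, Nat.choose_succ_self]
      simp
    rw [expand, shift, add_right_comm, ← sum_add_distrib, sum_range_succ' _ (m + 1)]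
    simp only [← add_smul, ← Nat.factorial_mul_choose_succ_mul_choose_succ]
    simp

theorem pow_mul_pow_sub_pow_mul_pow_of_mul_eq_mul_add_one (h : a * b = b * a + 1) (N : ℕ) :
    a ^ N * b ^ N - b ^ N * a ^ N =
      ∑ r ∈ Icc 1 N, (r.factorial * N.choose r ^ 2) • (b ^ (N - r) * a ^ (N - r)) := by
  rw [pow_mul_pow_of_mul_eq_mul_add_one h, range_eq_Ico, sum_eq_sum_Ico_succ_bot N.succ_pos]
  simp only [Nat.factorial_zero, Nat.choose_zero_right, Nat.sub_zero, mul_one, one_smul, sq,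
    mul_assoc, add_sub_cancel_left, zero_add, Nat.succ_eq_add_one, Ico_add_one_right_eq_Icc]

end CanonicalCommutation

section ComplexAlgebra

variable {R : Type*} [Ring R] [Algebra ℂ R]

theorem smul_add_mul_smul_sub_sub_smul_sub_mul_smul_add (c d : ℂ) (A B : R) :
    c • (A + B) * d • (A - B) - d • (A - B) * c • (A + B) = (2 * c * d) • (B * A - A * B) := by
  calc c • (A + B) * d • (A - B) - d • (A - B) * c • (A + B)
      = (c * d) • ((A + B) * (A - B) - (A - B) * (A + B)) := by
        rw [smul_mul_smul_comm, smul_mul_smul_comm, mul_comm d c, smul_sub]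
    _ = (c * d) • ((2 : ℂ) • (B * A - A * B)) := by
        rw [two_smul]
        noncomm_ring
    _ = (2 * c * d) • (B * A - A * B) := by
        rw [smul_smul]
        ring_nf

theorem quadrature_commutator (A B : R) :
    ((Real.sqrt 2 : ℂ))⁻¹ • (A + B) * (-Complex.I * ((Real.sqrt 2 : ℂ))⁻¹) • (A - B) -
        (-Complex.I * ((Real.sqrt 2 : ℂ))⁻¹) • (A - B) * ((Real.sqrt 2 : ℂ))⁻¹ • (A + B) =
      Complex.I • (A * B - B * A) := by
  have hc : 2 * ((Real.sqrt 2 : ℂ))⁻¹ * (-Complex.I * ((Real.sqrt 2 : ℂ))⁻¹) = -Complex.I := by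
    have h2 : ((Real.sqrt 2 : ℂ)) ^ 2 = 2 := by
      rw [← Complex.ofReal_pow, Real.sq_sqrt zero_le_two, Complex.ofReal_ofNat]
    field_simp
    rw [h2]
  rw [smul_add_mul_smul_sub_sub_smul_sub_mul_smul_add, hc, neg_smul, ← smul_neg, neg_sub]

theorem sub_smul_one_commutator (X P : R) (s t : ℂ) :
    (X - s • 1) * (P - t • 1) - (P - t • 1) * (X - s • 1) = X * P - P * X := by
  simp only [sub_mul, mul_sub, smul_mul_assoc, mul_smul_comm, mul_one, one_mul]
  module

theorem re_map_sub_smul_one_mul_self (φ : R →ₗ[ℂ] ℂ) (hφ : φ 1 = 1) (X : R) (s : ℝ) :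
    (φ ((X - (s : ℂ) • 1) * (X - (s : ℂ) • 1))).re =
      (φ (X * X)).re - 2 * s * (φ X).re + s ^ 2 := by
  have hexpand : (X - (s : ℂ) • 1) * (X - (s : ℂ) • 1) =
      X * X - (2 * s : ℂ) • X + ((s : ℂ) * s) • 1 := by
    simp only [sub_mul, mul_sub, smul_mul_assoc, mul_smul_comm, mul_one, one_mul]
    module
  rw [hexpand]
  simp only [map_add, map_sub, map_smul, hφ, smul_eq_mul, mul_one, Complex.add_re,
    Complex.sub_re, Complex.mul_re, Complex.mul_im, Complex.ofReal_re, Complex.ofReal_im,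
    Complex.re_ofNat, Complex.im_ofNat, mul_zero, zero_mul, add_zero, sub_zero]
  ring

theorem map_mul_pow_eq_zero {φ : R →ₗ[ℂ] ℂ} {a : R} (hφ : ∀ y, φ (y * a) = 0) (y : R) {k : ℕ}
    (hk : k ≠ 0) : φ (y * a ^ k) = 0 := by
  obtain ⟨k, rfl⟩ := Nat.exists_eq_succ_of_ne_zero hk
  rw [pow_succ, ← mul_assoc, hφ]

variable [StarRing R]

theorem natCast_mul_re_map_star_mul_self_le_re_map_sum {ι : Type*} (φ : R →ₗ[ℂ] ℂ)
    (hφ : ∀ x, 0 ≤ (φ (star x * x)).re) (s : Finset ι) (c : ι → ℕ) (x : ι → R) {i : ι}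
    (hi : i ∈ s) :
    (c i : ℝ) * (φ (star (x i) * x i)).re ≤ (φ (∑ j ∈ s, (c j : ℂ) • (star (x j) * x j))).re := by
  have hterm (j : ι) :
      (φ ((c j : ℂ) • (star (x j) * x j))).re = c j * (φ (star (x j) * x j)).re := by
    rw [map_smul, smul_eq_mul, ← Complex.ofReal_natCast, Complex.re_ofReal_mul]
  rw [map_sum, Complex.re_sum, ← hterm]
  exact single_le_sum (fun j _ => hterm j ▸ mul_nonneg (Nat.cast_nonneg _) (hφ (x j))) hi

variable [StarModule ℂ R]

theorem IsSelfAdjoint.neg_I_mul_smul_sub_star {c : ℂ} (hc : IsSelfAdjoint c) (A : R) :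
    IsSelfAdjoint ((-Complex.I * c) • (A - star A)) := by
  rw [IsSelfAdjoint, star_smul, star_sub, star_star, star_mul', hc.star_eq, star_neg,
    Complex.star_def, Complex.conj_I, neg_neg, ← neg_sub, smul_neg, ← neg_smul, ← neg_mul]

theorem re_neg_I_mul_map_commutator_le (φ : R →ₗ[ℂ] ℂ)
    (hφ : ∀ x, 0 ≤ (φ (star x * x)).re) {Y Z : R} (hY : IsSelfAdjoint Y) (hZ : IsSelfAdjoint Z) :
    (-Complex.I * φ (Y * Z - Z * Y)).re ≤ (φ (Y * Y)).re + (φ (Z * Z)).re := by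
  have hstar : star (Y + Complex.I • Z) = Y - Complex.I • Z := by
    rw [star_add, star_smul, hY.star_eq, hZ.star_eq, Complex.star_def, Complex.conj_I, neg_smul,
      sub_eq_add_neg]
  have hexpand : star (Y + Complex.I • Z) * (Y + Complex.I • Z) =
      Y * Y + Z * Z + Complex.I • (Y * Z - Z * Y) := by
    rw [hstar]
    simp only [sub_mul, mul_add, smul_mul_assoc, mul_smul_comm, smul_smul, Complex.I_mul_I,
      neg_one_smul, smul_sub]
    abel
  have h := hφ (Y + Complex.I • Z)
  rw [hexpand, map_add, map_add, map_smul, smul_eq_mul] at h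
  simp only [Complex.add_re, neg_mul, Complex.neg_re] at h ⊢
  linarith

theorem re_neg_I_mul_map_commutator_le_variance_add_variance (φ : R →ₗ[ℂ] ℂ) (h1 : φ 1 = 1)
    (hφ : ∀ x, 0 ≤ (φ (star x * x)).re) {X P : R} (hX : IsSelfAdjoint X) (hP : IsSelfAdjoint P) :
    (-Complex.I * φ (X * P - P * X)).re ≤
      ((φ (X * X)).re - (φ X).re ^ 2) + ((φ (P * P)).re - (φ P).re ^ 2) := by
  have hcentered (Y : R) (hY : IsSelfAdjoint Y) (s : ℝ) : IsSelfAdjoint (Y - (s : ℂ) • 1) :=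
    hY.sub (.smul (Complex.conj_ofReal s) (.one R))
  have h := re_neg_I_mul_map_commutator_le φ hφ (hcentered X hX (φ X).re)
    (hcentered P hP (φ P).re)
  rw [sub_smul_one_commutator, re_map_sub_smul_one_mul_self φ h1,
    re_map_sub_smul_one_mul_self φ h1] at h
  linarith

end ComplexAlgebra

theorem higher_order_quadrature_commutator (R : Type*) [Ring R] [Algebra ℂ R]
    [StarRing R] [StarModule ℂ R]
    (a : R) (hcomm : a * star a = star a * a + 1) (N : ℕ) (hN : 1 ≤ N) :
    (let X : R := ((Real.sqrt 2 : ℂ))⁻¹ • (a ^ N + (star a) ^ N)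
     let P : R := (-Complex.I * ((Real.sqrt 2 : ℂ))⁻¹) • (a ^ N - (star a) ^ N)
     -- the commutator identity
     (X * P - P * X =
        Complex.I • ∑ r ∈ Finset.Icc 1 N,
          ((r.factorial * (N.choose r) ^ 2 : ℕ) : ℂ) • ((star a) ^ (N - r) * a ^ (N - r))) ∧
     -- vacuum expectation of (1/i)[X,P] equals N!
     (∀ φ₀ : R →ₗ[ℂ] ℂ, φ₀ 1 = 1 → (∀ y : R, φ₀ (y * a) = 0) →
        φ₀ (X * P - P * X) = Complex.I * (N.factorial : ℂ)) ∧
     -- the variance bound for all states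
     (∀ φ : R →ₗ[ℂ] ℂ, φ 1 = 1 →
        (∀ x : R, 0 ≤ (φ (star x * x)).re ∧ (φ (star x * x)).im = 0) →
        (∀ x : R, φ (star x) = starRingEnd ℂ (φ x)) →
        (N.factorial : ℝ) ≤
          ((φ (X * X)).re - ((φ X).re) ^ 2) + ((φ (P * P)).re - ((φ P).re) ^ 2))) := by
  intro X P
  have hc : IsSelfAdjoint ((Real.sqrt 2 : ℂ))⁻¹ := IsSelfAdjoint.inv₀ (Complex.conj_ofReal _)
  have hX : IsSelfAdjoint X := by
    simpa only [star_pow] using hc.smul (.add_star_self (a ^ N))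
  have hP : IsSelfAdjoint P := by
    simpa only [star_pow] using hc.neg_I_mul_smul_sub_star (a ^ N)
  have hXP : X * P - P * X = Complex.I • ∑ r ∈ Icc 1 N,
      ((r.factorial * N.choose r ^ 2 : ℕ) : ℂ) • (star a ^ (N - r) * a ^ (N - r)) := by
    refine (quadrature_commutator _ _).trans ?_
    simp only [pow_mul_pow_sub_pow_mul_pow_of_mul_eq_mul_add_one hcomm, Nat.cast_smul_eq_nsmul]
  have hN_mem : N ∈ Icc 1 N := right_mem_Icc.mpr hN
  refine ⟨hXP, fun φ₀ h1 hvac => ?_, fun φ h1 hpos _ => ?_⟩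
  · rw [hXP, map_smul, smul_eq_mul, map_sum, sum_eq_single_of_mem N hN_mem]
    · simp [h1]
    · intro r hr hrN
      rw [map_smul, map_mul_pow_eq_zero hvac _ (Nat.sub_ne_zero_of_lt
        (lt_of_le_of_ne (mem_Icc.mp hr).2 hrN)), smul_zero]
  · calc (N.factorial : ℝ)
        = ((N.factorial * N.choose N ^ 2 : ℕ) : ℝ) * (φ (star (a ^ (N - N)) * a ^ (N - N))).re := by
          simp [h1]
      _ ≤ (φ (∑ r ∈ Icc 1 N, ((r.factorial * N.choose r ^ 2 : ℕ) : ℂ) •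
            (star (a ^ (N - r)) * a ^ (N - r)))).re :=
          natCast_mul_re_map_star_mul_self_le_re_map_sum φ (fun x => (hpos x).1) _
            (fun r => r.factorial * N.choose r ^ 2) (fun r => a ^ (N - r)) hN_mem
      _ = (-Complex.I * φ (X * P - P * X)).re := by
          rw [hXP, map_smul, smul_eq_mul, ← mul_assoc]
          simp [star_pow]
      _ ≤ _ := re_neg_I_mul_map_commutator_le_variance_add_variance φ h1 (fun x => (hpos x).1) hX hP
end
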